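/- Let (A,·,α) be a multiplicative Hom-associative algebra. Form Â = A ⊕ K·1_α with multiplication extending that of A by x·1_α = 1_α·x = α(x) for all x ∈ Â, and twist α extended by α(1_α) = 1_α. Then Â is a multiplicative Hom-associative algebra containing A as a subalgebra, and the left regular representation of Â on itself (x ↦ left multiplication by x) has zero kernel. Consequently, every multiplicative Hom-associative algebra A whose twist is injective admits a faithful left representation on a Hom-vector space with injective twist, namely the restriction to A of the left regular representation of Â; in particular it is finite-dimensional if A is. -/
import Mathlib


variable {K A : Type*} [Field K] [AddCommGroup A] [Module K A]

/-- Multiplication on the Hom-unital extension `Â = A ⊕ K·1_α`, where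
`1_α = (0,1)`, `x·1_α = 1_α·x = α(x)` and `α(1_α) = 1_α`. -/
def hatMul (mul : A →ₗ[K] A →ₗ[K] A) (α : A →ₗ[K] A) (p q : A × K) : A × K :=
  (mul p.1 q.1 + q.2 • α p.1 + p.2 • α q.1, p.2 * q.2)

/-- The twist map on the Hom-unital extension. -/
def hatTw (α : A →ₗ[K] A) (p : A × K) : A × K := (α p.1, p.2)

/-- The Hom-unital extension `Â` of a multiplicative Hom-associative algebra with
injective twist is a multiplicative Hom-associative algebra containing `A` as a
subalgebra, whose left regular representation has zero kernel; consequently the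
restriction to `A` of the left regular representation of `Â` is a faithful left
representation of `A` on the Hom-vector space `(Â, α̂)` with injective twist. -/
theorem stmt12 (mul : A →ₗ[K] A →ₗ[K] A) (α : A →ₗ[K] A)
    (hassoc : ∀ x y z : A, mul (mul x y) (α z) = mul (α x) (mul y z))
    (hmult : ∀ x y : A, α (mul x y) = mul (α x) (α y))
    (hinj : Function.Injective α) :
    -- Â is Hom-associative
    (∀ p q r : A × K,
      hatMul mul α (hatMul mul α p q) (hatTw α r)
        = hatMul mul α (hatTw α p) (hatMul mul α q r)) ∧
    -- Â is multiplicative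
    (∀ p q : A × K,
      hatTw α (hatMul mul α p q) = hatMul mul α (hatTw α p) (hatTw α q)) ∧
    -- A embeds as a subalgebra of Â
    (∀ x y : A, hatMul mul α (x, 0) (y, 0) = (mul x y, (0 : K))) ∧
    (∀ x : A, hatTw α (x, 0) = (α x, (0 : K))) ∧
    -- the twist of Â is injective
    Function.Injective (hatTw α) ∧
    -- the left regular representation of Â has zero kernel
    (∀ p : A × K, (∀ q : A × K, hatMul mul α p q = 0) → p = 0) ∧
    -- the restriction to A is a left representation of A on (Â, α̂) …
    (∀ x y : A, ∀ q : A × K,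
      hatMul mul α (mul x y, (0 : K)) (hatTw α q)
        = hatMul mul α (α x, (0 : K)) (hatMul mul α (y, (0 : K)) q)) ∧
    -- … and it is faithful
    (∀ x : A, (∀ q : A × K, hatMul mul α (x, 0) q = 0) → x = 0) := by
  refine ⟨?_, ?_, ?_, ?_, ?_, ?_, ?_, ?_⟩
  · rintro ⟨a,s⟩ ⟨b,t⟩ ⟨c,u⟩
    simp only [hatMul, hatTw, Prod.mk.injEq, map_add, map_smul, LinearMap.add_apply,
      LinearMap.smul_apply, smul_add, smul_smul]
    constructor
    · rw [hassoc, hmult, hmult]; ring_nf; abel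
    · ring
  · rintro ⟨a,s⟩ ⟨b,t⟩
    simp only [hatMul, hatTw, Prod.mk.injEq, map_add, map_smul]
    rw [hmult]; trivial
  · intro x y; simp [hatMul]
  · intro x; simp [hatTw]
  · rintro ⟨a,s⟩ ⟨b,t⟩ h
    simp only [hatTw, Prod.mk.injEq] at h
    exact Prod.ext (hinj h.1) h.2
  · rintro ⟨a,s⟩ h
    have := h (0, 1)
    simp only [hatMul, Prod.mk.injEq, Prod.ext_iff] at this
    simp only [map_zero, LinearMap.map_zero, smul_zero, one_smul, add_zero, mul_one] at this
    obtain ⟨h1, h2⟩ := this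
    have ha : α a = 0 := by simpa using h1
    exact Prod.ext (hinj (by simpa using ha)) h2
  · rintro x y ⟨b, t⟩
    simp only [hatMul, hatTw, Prod.mk.injEq, map_add, map_smul, smul_add, smul_smul]
    constructor
    · rw [hassoc, hmult]; simp [zero_smul]
    · ring
  · intro x h
    have := h (0, 1)
    simp only [hatMul, Prod.ext_iff] at this
    have : α x = 0 := by simpa using this.1
    exact hinj (by simpa using this)
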